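/- Let α > 0, Δ > 0, and define A : ℤ → ℝ by A[h] = e^{−αΔ|h|} (the Matérn ν = 1/2 covariance on a grid with spacing Δ, σ² = 1), and define Q : ℤ → ℝ by Q[0] = (1 + e^{−2Δα})/(Δ(1 − e^{−2Δα})), Q[h] = −e^{−Δα}/(Δ(1 − e^{−2Δα})) for |h| = 1, and Q[h] = 0 for |h| > 1. Then for every h ∈ ℤ, Δ · Σ_{k∈ℤ} A[h − k] Q[k] = 1 if h = 0 and = 0 otherwise; i.e., Q is the inverse operator of A. -/

import Mathlib

open Real

/-!
With `q = e^{-αΔ} ∈ (0, 1)` the covariance is `A[h] = q^{|h|}` and `Q` is supported on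
`{-1, 0, 1}`, so the convolution at `h` is the three-term combination
`((1 + q²) q^{|h|} - q (q^{|h+1|} + q^{|h-1|})) / (1 - q²)`.
For `h ≠ 0` the two neighbours of `|h|` are `|h| ± 1`, so `q (q^{|h+1|} + q^{|h-1|}) = (1 + q²) q^{|h|}`
and the numerator vanishes; at `h = 0` both neighbours equal `1` and the numerator is `1 - q²`.
-/

theorem tsum_eq_of_forall_one_lt_abs {M : Type*} [AddCommMonoid M] [TopologicalSpace M]
    (g : ℤ → M) (hg : ∀ k : ℤ, 1 < |k| → g k = 0) :
    ∑' k : ℤ, g k = g (-1) + g 0 + g 1 := by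
  rw [tsum_eq_sum (s := {-1, 0, 1}) fun k hk => hg k ?_]
  · simp [add_assoc]
  · simp only [Finset.mem_insert, Finset.mem_singleton, not_or] at hk
    rcases abs_cases k with ⟨hk', _⟩ | ⟨hk', _⟩ <;> omega

theorem mul_pow_natAbs_add_pow_natAbs_of_ne_zero {R : Type*} [CommSemiring R] (q : R)
    {h : ℤ} (hh : h ≠ 0) :
    q * (q ^ (h + 1).natAbs + q ^ (h - 1).natAbs) = (1 + q ^ 2) * q ^ h.natAbs := by
  obtain ⟨n, hn, ⟨hup, hdown⟩ | ⟨hup, hdown⟩⟩ : ∃ n : ℕ, h.natAbs = n + 1 ∧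
      ((h + 1).natAbs = n + 2 ∧ (h - 1).natAbs = n ∨
        (h + 1).natAbs = n ∧ (h - 1).natAbs = n + 2) := by
    refine ⟨h.natAbs - 1, ?_, ?_⟩ <;> omega
  · rw [hn, hup, hdown]; ring
  · rw [hn, hup, hdown]; ring

theorem pow_natAbs_tridiagonal_combination {K : Type*} [Field K] (q : K) (hq : q ^ 2 ≠ 1)
    (h : ℤ) :
    ((1 + q ^ 2) * q ^ h.natAbs - q * (q ^ (h + 1).natAbs + q ^ (h - 1).natAbs)) / (1 - q ^ 2)
      = if h = 0 then 1 else 0 := by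
  split_ifs with hh
  · subst hh
    rw [div_eq_one_iff_eq (sub_ne_zero.2 (Ne.symm hq))]
    change (1 + q ^ 2) * q ^ 0 - q * (q ^ 1 + q ^ 1) = 1 - q ^ 2
    ring
  · rw [mul_pow_natAbs_add_pow_natAbs_of_ne_zero q hh, sub_self, zero_div]

theorem exp_neg_mul_abs_intCast (c : ℝ) (h : ℤ) :
    exp (-(c * |(h : ℝ)|)) = exp (-c) ^ h.natAbs := by
  rw [← exp_nat_mul, Nat.cast_natAbs, Int.cast_abs]
  ring_nf

theorem exponential_inverse_operator
    (α Δ : ℝ) (hα : 0 < α) (hΔ : 0 < Δ) (A Q : ℤ → ℝ)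
    (hA : ∀ h : ℤ, A h = Real.exp (-(α * Δ * |(h : ℝ)|)))
    (hQ0 : Q 0 = (1 + Real.exp (-(2 * Δ * α))) / (Δ * (1 - Real.exp (-(2 * Δ * α)))))
    (hQ1 : ∀ h : ℤ, |h| = 1 →
      Q h = -Real.exp (-(Δ * α)) / (Δ * (1 - Real.exp (-(2 * Δ * α)))))
    (hQ2 : ∀ h : ℤ, 1 < |h| → Q h = 0) :
    ∀ h : ℤ, Δ * ∑' k : ℤ, A (h - k) * Q k = if h = 0 then 1 else 0 := by
  intro h
  set q := exp (-(α * Δ))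
  have hA_pow (k : ℤ) : A k = q ^ k.natAbs := by rw [hA, exp_neg_mul_abs_intCast]
  have hq : exp (-(Δ * α)) = q := by rw [mul_comm]
  have hq_sq : exp (-(2 * Δ * α)) = q ^ 2 := by rw [← exp_nat_mul]; ring_nf
  have hq_lt : q ^ 2 < 1 := by rw [← hq_sq, exp_lt_one_iff]; nlinarith
  rw [tsum_eq_of_forall_one_lt_abs _ fun k hk => by rw [hQ2 k hk, mul_zero],
    hQ1 (-1) rfl, hQ1 1 rfl, hQ0, hq, hq_sq, hA_pow, hA_pow, hA_pow, sub_neg_eq_add, sub_zero,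
    ← pow_natAbs_tridiagonal_combination q hq_lt.ne h]
  field_simp [hΔ.ne', (sub_pos.2 hq_lt).ne']
  ring
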